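/- arXiv:1304.6862 — 8 statements merged into one kernel-verified Lean document; each statement's English description precedes it below -/
import Mathlib

section
/- Let X be a set carrying an approach distance δ with ultrafilter convergence a, and suppose that for all 𝔛 ∈ U(U X), all x₀ ∈ X and all u, v ∈ ℝ≥0∞ one has max (u + v) (a (m_X 𝔛) x₀) ≥ ⨅_{𝔵 ∈ U X} ( max u (a 𝔵 x₀) + max v (Ū a 𝔛 𝔵) ). Then X is exponentiable in the category App of approach spaces and contractions. -/
open scoped ENNReal
open CategoryTheory

noncomputable section

/-- The extension `Ū r` of a numerical relation `r : X ⇸ Y` to ultrafilters: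
`Ū r (𝔵, 𝔶) = ⨆_{A ∈ 𝔵} ⨆_{B ∈ 𝔶} ⨅_{x ∈ A} ⨅_{y ∈ B} r x y`. -/
def uExt {X Y : Type*} (r : X → Y → ℝ≥0∞) (𝔵 : Ultrafilter X) (𝔶 : Ultrafilter Y) : ℝ≥0∞ :=
  ⨆ A ∈ 𝔵, ⨆ B ∈ 𝔶, ⨅ x ∈ A, ⨅ y ∈ B, r x y

/-- The multiplication `m_X : U (U X) → U X` of the ultrafilter monad:
`m_X 𝔛 = {A ⊆ X | {𝔞 ∈ U X | A ∈ 𝔞} ∈ 𝔛}`. -/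
def mU {X : Type*} (𝔛 : Ultrafilter (Ultrafilter X)) : Ultrafilter X :=
  𝔛.bind id

/-- `ξ : U [0,∞] → [0,∞]`, `ξ 𝔳 = ⨆_{A ∈ 𝔳} ⨅_{u ∈ A} u`. -/
def xi (𝔳 : Ultrafilter ℝ≥0∞) : ℝ≥0∞ :=
  ⨆ A ∈ 𝔳, ⨅ u ∈ A, u

/-- `δ : P X × X → [0,∞]` is an approach distance. -/
structure IsApproachDistance {X : Type*} (δ : Set X → X → ℝ≥0∞) : Prop where
  dist_singleton : ∀ x : X, δ {x} x = 0
  dist_empty : ∀ x : X, δ (∅ : Set X) x = ∞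
  dist_union : ∀ (A B : Set X) (x : X), δ (A ∪ B) x = min (δ A x) (δ B x)
  dist_closure : ∀ (A : Set X) (x : X) (ε : ℝ≥0∞), δ A x ≤ δ {y | δ A y ≤ ε} x + ε

/-- The ultrafilter convergence associated to a distance function `δ`:
`a 𝔵 x = ⨆_{A ∈ 𝔵} δ A x`. -/
def appConv {X : Type*} (δ : Set X → X → ℝ≥0∞) (𝔵 : Ultrafilter X) (x : X) : ℝ≥0∞ :=
  ⨆ A ∈ 𝔵, δ A x

/-- `f : X → Y` is a contraction with respect to convergences `a` and `b`:
`a 𝔵 x ≥ b (U f 𝔵) (f x)`. -/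
def IsContraction {X Y : Type*} (a : Ultrafilter X → X → ℝ≥0∞)
    (b : Ultrafilter Y → Y → ℝ≥0∞) (f : X → Y) : Prop :=
  ∀ (𝔵 : Ultrafilter X) (x : X), b (Ultrafilter.map f 𝔵) (f x) ≤ a 𝔵 x

/-- Objects of the category `App`: sets equipped with an approach distance. -/
structure AppSpace : Type 1 where
  carrier : Type
  dist : Set carrier → carrier → ℝ≥0∞
  isApproachDistance : IsApproachDistance dist

/-- The category `App` of approach spaces and contractions. -/
instance : Category AppSpace where
  Hom A B := {f : A.carrier → B.carrier //
    IsContraction (appConv A.dist) (appConv B.dist) f}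
  id A := ⟨fun x => x, fun 𝔵 x => by simp [Ultrafilter.map_id']⟩
  comp {A B C} f g := ⟨g.1 ∘ f.1, fun 𝔵 x => by
    calc appConv C.dist (Ultrafilter.map (g.1 ∘ f.1) 𝔵) (g.1 (f.1 x))
        = appConv C.dist (Ultrafilter.map g.1 (Ultrafilter.map f.1 𝔵)) (g.1 (f.1 x)) := by
          rw [Ultrafilter.map_map]
      _ ≤ appConv B.dist (Ultrafilter.map f.1 𝔵) (f.1 x) := g.2 _ _
      _ ≤ appConv A.dist 𝔵 x := f.2 𝔵 x⟩

/-- `p : P ⟶ A`, `q : P ⟶ B` exhibit `P` as a (cartesian) product of `A` and `B` in `App`. -/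
def IsProductCone {A B P : AppSpace} (p : P ⟶ A) (q : P ⟶ B) : Prop :=
  ∀ (W : AppSpace) (f : W ⟶ A) (g : W ⟶ B), ∃! h : W ⟶ P, h ≫ p = f ∧ h ≫ q = g

/-- An approach space `X` is exponentiable in `App` if the cartesian product functor
`(-) × X : App → App` (formalised as: some functor `F` equipped with natural projections
exhibiting each `F Z` as the product `Z × X`) has a right adjoint. -/
def AppExponentiable (X : AppSpace) : Prop :=
  ∃ (F R : AppSpace ⥤ AppSpace) (_ : F ⊣ R)
    (p : ∀ Z : AppSpace, F.obj Z ⟶ Z) (q : ∀ Z : AppSpace, F.obj Z ⟶ X),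
    (∀ Z : AppSpace, IsProductCone (p Z) (q Z)) ∧
    (∀ (Z W : AppSpace) (h : Z ⟶ W), F.map h ≫ p W = p Z ≫ h ∧ F.map h ≫ q W = q Z)


/-!
Approach distances on `X` are the same as ultrafilter convergences `a` that are reflexive,
`a (pure x) x = 0`, and transitive, `a (m 𝔛) x ≤ Ū a 𝔛 𝔵 + a 𝔵 x`, so products and exponentials
can be built as convergences. The product carries the maximum of the two marginal convergences.
On the contractions `X → Z`, let `𝔭` converge to `h` with the least `γ` such that
`c (ev 𝔴) (h x) ≤ max γ (a (π₂ 𝔴) x)` for all `𝔴` over `𝔭` and all `x`. Currying is then a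
bijection between contractions `W × X → Z` and `W → Z^X`, natural in `W` and `Z`, provided this
convergence is transitive, and that is where the hypothesis enters. Given `𝔚` over `m 𝔓`, lift it
to `𝒲` with `m 𝒲 = 𝔚` lying over `𝔓` (the naturality square of `m` is a weak pullback).
Coupling `𝒲` with `𝔭` and an arbitrary `𝔵` bounds `c (ev 𝔚) (h x₀)` by
`max v (a 𝔵 x₀) + max u (Ū a 𝔛 𝔵)`, where `u = Ū (Z^X) 𝔓 𝔭`, `v` is the value of `𝔭` at `h`, and
`𝔛 = UUπ₂ 𝒲`, so that `m 𝔛 = π₂ 𝔚`. The hypothesis turns the infimum of these bounds over `𝔵`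
into `max (u + v) (a (π₂ 𝔚) x₀)`.
-/

namespace Ultrafilter

open Filter Set

variable {α β γ : Type*}

theorem mem_mU {𝔛 : Ultrafilter (Ultrafilter α)} {A : Set α} :
    A ∈ mU 𝔛 ↔ {𝔞 : Ultrafilter α | A ∈ 𝔞} ∈ 𝔛 := Iff.rfl

theorem map_mU (f : α → β) (𝔛 : Ultrafilter (Ultrafilter α)) :
    map f (mU 𝔛) = mU (map (map f) 𝔛) := rfl

theorem map_eq_of_tendsto {f : α → β} {𝔞 : Ultrafilter α} {𝔟 : Ultrafilter β}
    (h : Tendsto f 𝔞 𝔟) : map f 𝔞 = 𝔟 :=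
  eq_of_le h

theorem map_congr {f g : α → β} {𝔞 : Ultrafilter α} (h : f =ᶠ[𝔞] g) : map f 𝔞 = map g 𝔞 :=
  coe_injective (Filter.map_congr h)

theorem map_const (b : β) (𝔞 : Ultrafilter α) : map (fun _ => b) 𝔞 = pure b :=
  coe_injective Filter.map_const

theorem exists_le_of_forall_inter_nonempty {f : Filter α} {s : Set α}
    (h : ∀ U ∈ f, (U ∩ s).Nonempty) : ∃ 𝔘 : Ultrafilter α, ↑𝔘 ≤ f ∧ s ∈ 𝔘 :=
  have := inf_principal_neBot_iff.2 h
  ⟨of _, (of_le _).trans inf_le_left, of_le _ (mem_inf_of_right (mem_principal_self s))⟩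

theorem exists_forall_mem_of_monotone {f : Filter α} {F : Set α → Set β} (hF : Monotone F)
    (h : ∀ A ∈ f, (F A).Nonempty) : ∃ 𝔘 : Ultrafilter β, ∀ A ∈ f, F A ∈ 𝔘 :=
  have := (lift'_neBot_iff hF).2 h
  ⟨of _, fun _ hA => of_le _ (mem_lift' hA)⟩

theorem exists_coupling_of_map_eq {f : α → γ} {g : β → γ} {𝔞 : Ultrafilter α}
    {𝔟 : Ultrafilter β} (h : map f 𝔞 = map g 𝔟) :
    ∃ 𝔴 : Ultrafilter (α × β),
      map Prod.fst 𝔴 = 𝔞 ∧ map Prod.snd 𝔴 = 𝔟 ∧ ∀ᶠ p : α × β in 𝔴, f p.1 = g p.2 := by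
  obtain ⟨𝔴, hle, hfg⟩ := exists_le_of_forall_inter_nonempty
      (f := (𝔞 : Filter α) ×ˢ (𝔟 : Filter β)) (s := {p | f p.1 = g p.2}) fun U hU => by
    obtain ⟨A, hA, B, hB, hAB⟩ := mem_prod_iff.1 hU
    have hfA : f '' A ∈ map g 𝔟 := h ▸ image_mem_map hA
    obtain ⟨_, ⟨a, ha, rfl⟩, b, hb, hab⟩ := nonempty_of_mem (inter_mem hfA (image_mem_map hB))
    exact ⟨(a, b), hAB ⟨ha, hb⟩, hab.symm⟩
  exact ⟨𝔴, map_eq_of_tendsto (tendsto_fst.mono_left hle),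
    map_eq_of_tendsto (tendsto_snd.mono_left hle), hfg⟩

theorem exists_map_prodMap_eq (φ : α → β) (𝔴 : Ultrafilter (β × γ)) (𝔰 : Ultrafilter α)
    (h : map φ 𝔰 = map Prod.fst 𝔴) :
    ∃ 𝔴' : Ultrafilter (α × γ), map (Prod.map φ id) 𝔴' = 𝔴 ∧ map Prod.fst 𝔴' = 𝔰 := by
  obtain ⟨𝔷, h𝔰, h𝔴, hφ⟩ := exists_coupling_of_map_eq h
  refine ⟨map (fun p : α × β × γ => (p.1, p.2.2)) 𝔷, ?_, h𝔰⟩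
  rw [map_map, ← h𝔴]
  exact map_congr (hφ.mono fun p hp => Prod.ext hp rfl)

theorem exists_mU_eq_and_map_map_eq (f : α → β) {𝔚 : Ultrafilter α}
    {𝔓 : Ultrafilter (Ultrafilter β)} (h : map f 𝔚 = mU 𝔓) :
    ∃ 𝒲 : Ultrafilter (Ultrafilter α), mU 𝒲 = 𝔚 ∧ map (map f) 𝒲 = 𝔓 := by
  have hmono : Monotone fun A : Set α => {𝔴 : Ultrafilter α | A ∈ 𝔴} :=
    fun _ _ hAB _ hA => mem_of_superset hA hAB
  have : (Filter.comap (map f) ↑𝔓 ⊓ (𝔚 : Filter α).lift' fun A => {𝔴 | A ∈ 𝔴}).NeBot := by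
    refine Filter.inf_neBot_iff.2 fun U hU V hV => ?_
    obtain ⟨𝒞, h𝒞, hU⟩ := Filter.mem_comap.1 hU
    obtain ⟨A, hA, hV⟩ := (mem_lift'_sets hmono).1 hV
    have hfA : {𝔠 : Ultrafilter β | f '' A ∈ 𝔠} ∈ 𝔓 := mem_mU.1 (h ▸ image_mem_map hA)
    obtain ⟨𝔠, hfA𝔠, h𝔠⟩ := nonempty_of_mem (inter_mem hfA h𝒞)
    refine ⟨ofComapInfPrincipal hfA𝔠, hU ?_, hV (ofComapInfPrincipal_mem hfA𝔠)⟩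
    rw [mem_preimage, ofComapInfPrincipal_eq_of_map]
    exact h𝔠
  have hle := of_le (Filter.comap (map f) ↑𝔓 ⊓ (𝔚 : Filter α).lift' fun A => {𝔴 | A ∈ 𝔴})
  exact ⟨of _, eq_of_le fun A hA => hle (mem_inf_of_right (mem_lift' hA)),
    map_eq_of_tendsto (tendsto_comap.mono_left (hle.trans inf_le_left))⟩

theorem exists_coupling₃ {R : α → β → Prop} {S : α → γ → Prop} {𝔞 : Ultrafilter α}
    {𝔟 : Ultrafilter β} {𝔠 : Ultrafilter γ} (hR : ∀ B ∈ 𝔟, ∀ᶠ x in 𝔞, ∃ y ∈ B, R x y)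
    (hS : ∀ C ∈ 𝔠, ∀ᶠ x in 𝔞, ∃ z ∈ C, S x z) :
    ∃ 𝔘 : Ultrafilter (α × β × γ), map Prod.fst 𝔘 = 𝔞 ∧ map Prod.fst (map Prod.snd 𝔘) = 𝔟 ∧
      map Prod.snd (map Prod.snd 𝔘) = 𝔠 ∧ ∀ᶠ t : α × β × γ in 𝔘, R t.1 t.2.1 ∧ S t.1 t.2.2 := by
  obtain ⟨𝔘, hle, hRS⟩ := exists_le_of_forall_inter_nonempty
      (f := (𝔞 : Filter α) ×ˢ ((𝔟 : Filter β) ×ˢ (𝔠 : Filter γ)))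
      (s := {t | R t.1 t.2.1 ∧ S t.1 t.2.2}) fun U hU => by
    obtain ⟨A, hA, V, hV, hAV⟩ := mem_prod_iff.1 hU
    obtain ⟨B, hB, C, hC, hBC⟩ := mem_prod_iff.1 hV
    obtain ⟨x, ⟨hxA, y, hyB, hxy⟩, z, hzC, hxz⟩ :=
      nonempty_of_mem (inter_mem (inter_mem hA (hR B hB)) (hS C hC))
    exact ⟨(x, y, z), hAV ⟨hxA, hBC ⟨hyB, hzC⟩⟩, hxy, hxz⟩
  exact ⟨𝔘, map_eq_of_tendsto (tendsto_fst.mono_left hle),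
    map_eq_of_tendsto ((tendsto_fst.comp tendsto_snd).mono_left hle),
    map_eq_of_tendsto ((tendsto_snd.comp tendsto_snd).mono_left hle), hRS⟩

end Ultrafilter

open Ultrafilter

theorem le_add_of_forall_lt_imp_le_add {t a b : ℝ≥0∞} (h : ∀ c, a < c → t ≤ c + b) :
    t ≤ a + b :=
  tsub_le_iff_right.1 (le_of_forall_gt_imp_ge_of_dense fun c hc => tsub_le_iff_right.2 (h c hc))

section uExt

variable {α β γ : Type*} {r : α → β → ℝ≥0∞} {𝔞 : Ultrafilter α} {𝔟 : Ultrafilter β} {c : ℝ≥0∞}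

theorem iInf_le_uExt {A : Set α} {B : Set β} (hA : A ∈ 𝔞) (hB : B ∈ 𝔟) :
    ⨅ x ∈ A, ⨅ y ∈ B, r x y ≤ uExt r 𝔞 𝔟 :=
  le_iSup₂_of_le A hA (le_iSup₂_of_le (f := fun B _ => ⨅ x ∈ A, ⨅ y ∈ B, r x y) B hB le_rfl)

theorem uExt_le_of_forall_exists (h : ∀ A ∈ 𝔞, ∀ B ∈ 𝔟, ∃ x ∈ A, ∃ y ∈ B, r x y ≤ c) :
    uExt r 𝔞 𝔟 ≤ c :=
  iSup₂_le fun A hA => iSup₂_le fun B hB => by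
    obtain ⟨x, hx, y, hy, hxy⟩ := h A hA B hB
    exact (iInf₂_le x hx).trans ((iInf₂_le y hy).trans hxy)

theorem uExt_map_map_le {𝔘 : Ultrafilter γ} {f : γ → α} {g : γ → β}
    (h : ∀ᶠ t in 𝔘, r (f t) (g t) ≤ c) : uExt r (map f 𝔘) (map g 𝔘) ≤ c :=
  uExt_le_of_forall_exists fun A hA B hB => by
    have hAB : ∀ᶠ t in 𝔘, f t ∈ A ∧ g t ∈ B ∧ r (f t) (g t) ≤ c :=
      Filter.Eventually.and hA (Filter.Eventually.and hB h)
    obtain ⟨t, htA, htB, ht⟩ := hAB.exists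
    exact ⟨f t, htA, g t, htB, ht⟩

theorem eventually_exists_lt_of_uExt_lt (h : uExt r 𝔞 𝔟 < c) {B : Set β} (hB : B ∈ 𝔟) :
    ∀ᶠ x in 𝔞, ∃ y ∈ B, r x y < c := by
  by_contra hn
  refine h.not_ge (le_trans ?_ (iInf_le_uExt (compl_mem_iff_notMem.2 hn) hB))
  exact le_iInf₂ fun x hx => le_iInf₂ fun y hy => not_lt.1 fun hxy => hx ⟨y, hy, hxy⟩

theorem eventually_exists_lt_of_uExt_lt' (h : uExt r 𝔞 𝔟 < c) {A : Set α} (hA : A ∈ 𝔞) :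
    ∀ᶠ y in 𝔟, ∃ x ∈ A, r x y < c := by
  by_contra hn
  refine h.not_ge (le_trans ?_ (iInf_le_uExt hA (compl_mem_iff_notMem.2 hn)))
  exact le_iInf₂ fun x hx => le_iInf₂ fun y hy => not_lt.1 fun hxy => hy ⟨x, hx, hxy⟩

end uExt

section Contraction

variable {X Y Z : Type*} {a : Ultrafilter X → X → ℝ≥0∞} {b : Ultrafilter Y → Y → ℝ≥0∞}
  {c : Ultrafilter Z → Z → ℝ≥0∞}

theorem IsContraction.comp {f : X → Y} {g : Y → Z} (hg : IsContraction b c g)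
    (hf : IsContraction a b f) : IsContraction a c (g ∘ f) :=
  fun 𝔵 x => (hg (map f 𝔵) (f x)).trans (hf 𝔵 x)

theorem IsContraction.uExt_map_map_le {f : X → Y} (hf : IsContraction a b f)
    (𝔛 : Ultrafilter (Ultrafilter X)) (𝔵 : Ultrafilter X) :
    uExt b (map (map f) 𝔛) (map f 𝔵) ≤ uExt a 𝔛 𝔵 :=
  iSup₂_le fun 𝒜 h𝒜 => iSup₂_le fun B hB => by
    refine le_trans ?_ (iInf_le_uExt (r := a) (Ultrafilter.mem_map.1 h𝒜)
      (Ultrafilter.mem_map.1 hB))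
    exact le_iInf₂ fun 𝔶 h𝔶 => le_iInf₂ fun y hy =>
      (iInf₂_le (map f 𝔶) h𝔶).trans ((iInf₂_le (f y) hy).trans (hf 𝔶 y))

end Contraction

structure IsApproachConvergence {X : Type*} (a : Ultrafilter X → X → ℝ≥0∞) : Prop where
  pure_self : ∀ x : X, a (pure x) x = 0
  mU_le : ∀ (𝔛 : Ultrafilter (Ultrafilter X)) (𝔵 : Ultrafilter X) (x : X),
    a (mU 𝔛) x ≤ uExt a 𝔛 𝔵 + a 𝔵 x

section Distance

variable {X : Type*} {δ : Set X → X → ℝ≥0∞} {A B : Set X} {𝔵 : Ultrafilter X} {x : X}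

theorem le_appConv (hA : A ∈ 𝔵) : δ A x ≤ appConv δ 𝔵 x :=
  le_iSup₂ (f := fun A (_ : A ∈ 𝔵) => δ A x) A hA

namespace IsApproachDistance

variable (hδ : IsApproachDistance δ)
include hδ

theorem antitone_left (hAB : A ⊆ B) : δ B x ≤ δ A x := by
  rw [← Set.union_eq_self_of_subset_left hAB, hδ.dist_union]
  exact min_le_left _ _

theorem appConv_pure_self (x : X) : appConv δ (pure x) x = 0 :=
  le_antisymm (iSup₂_le fun _ hA => (hδ.antitone_left (Set.singleton_subset_iff.2 hA)).trans
    (hδ.dist_singleton x).le) zero_le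

theorem appConv_mU_le (𝔛 : Ultrafilter (Ultrafilter X)) (𝔵 : Ultrafilter X) (x : X) :
    appConv δ (mU 𝔛) x ≤ uExt (appConv δ) 𝔛 𝔵 + appConv δ 𝔵 x :=
  iSup₂_le fun A hA => le_add_of_forall_lt_imp_le_add fun c hc => by
    have hclose : {y | δ A y ≤ c} ∈ 𝔵 :=
      Filter.mem_of_superset (eventually_exists_lt_of_uExt_lt' hc (mem_mU.1 hA))
        fun y ⟨_, h𝔶, hy⟩ => (le_appConv h𝔶).trans hy.le
    calc δ A x ≤ δ {y | δ A y ≤ c} x + c := hδ.dist_closure A x c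
      _ ≤ appConv δ 𝔵 x + c := add_le_add (le_appConv hclose) le_rfl
      _ = c + appConv δ 𝔵 x := add_comm _ _

theorem isApproachConvergence_appConv : IsApproachConvergence (appConv δ) :=
  ⟨hδ.appConv_pure_self, hδ.appConv_mU_le⟩

end IsApproachDistance

end Distance

section Convergence

variable {X : Type*} {a : Ultrafilter X → X → ℝ≥0∞} {A : Set X} {𝔵 : Ultrafilter X} {x : X}
  {c : ℝ≥0∞}

def distOf (a : Ultrafilter X → X → ℝ≥0∞) (A : Set X) (x : X) : ℝ≥0∞ :=
  ⨅ (𝔵 : Ultrafilter X) (_ : A ∈ 𝔵), a 𝔵 x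

theorem distOf_le (hA : A ∈ 𝔵) : distOf a A x ≤ a 𝔵 x :=
  iInf₂_le 𝔵 hA

theorem exists_lt_of_distOf_lt (h : distOf a A x < c) :
    ∃ 𝔵 : Ultrafilter X, A ∈ 𝔵 ∧ a 𝔵 x < c := by
  simpa only [distOf, iInf_lt_iff, exists_prop] using h

namespace IsApproachConvergence

variable (ha : IsApproachConvergence a)
include ha

theorem distOf_closure_le (A : Set X) (x : X) (ε : ℝ≥0∞) :
    distOf a A x ≤ distOf a {y | distOf a A y ≤ ε} x + ε := by
  refine le_add_of_forall_lt_imp_le_add fun c hc => ?_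
  rw [add_comm]
  refine le_add_of_forall_lt_imp_le_add fun e he => ?_
  -- choosing for each `y` with `distOf a A y ≤ ε` some `g y ∋ A` converging to `y` up to `e`,
  -- `A ∈ m (U g 𝔷)` for any `𝔷 ∋ {y | distOf a A y ≤ ε}`
  obtain ⟨𝔷, hE, h𝔷⟩ := exists_lt_of_distOf_lt hc
  have hex : ∀ y ∈ {y | distOf a A y ≤ ε}, ∃ 𝔶 : Ultrafilter X, A ∈ 𝔶 ∧ a 𝔶 y < e :=
    fun y hy => exists_lt_of_distOf_lt (lt_of_le_of_lt hy he)
  have : Nonempty (Ultrafilter X) := ⟨pure x⟩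
  choose! g hgA hg using hex
  have hA : A ∈ mU (map g 𝔷) := mem_mU.2 (mem_map.2 (Filter.mem_of_superset hE hgA))
  have hclose : uExt a (map g 𝔷) 𝔷 ≤ e := by
    simpa only [map_id] using uExt_map_map_le (f := g) (g := id) (Filter.mem_of_superset hE
      fun y hy => (hg y hy).le)
  calc distOf a A x ≤ a (mU (map g 𝔷)) x := distOf_le hA
    _ ≤ uExt a (map g 𝔷) 𝔷 + a 𝔷 x := ha.mU_le _ _ _
    _ ≤ e + c := add_le_add hclose h𝔷.le

theorem isApproachDistance_distOf : IsApproachDistance (distOf a) where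
  dist_singleton x :=
    le_antisymm ((distOf_le (mem_pure.2 (Set.mem_singleton x))).trans (ha.pure_self x).le) zero_le
  dist_empty x := by simp only [distOf, empty_notMem, iInf_false, iInf_top]
  dist_union A B x := by simp only [distOf, union_mem_iff, iInf_or, iInf_inf_eq]
  dist_closure := ha.distOf_closure_le

theorem appConv_distOf : appConv (distOf a) = a := by
  refine funext₂ fun 𝔶 y => le_antisymm (iSup₂_le fun A hA => distOf_le hA) ?_
  refine le_of_forall_gt_imp_ge_of_dense fun c hc => ?_
  -- a Kowalsky-type ultrafilter: it contains, for every `B ∈ 𝔶`, the `𝔷 ∋ B` close to `y`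
  obtain ⟨𝒳, h𝒳⟩ := exists_forall_mem_of_monotone (f := 𝔶)
    (F := fun B => {𝔷 | B ∈ 𝔷 ∧ a 𝔷 y < c})
    (fun _ _ hBC _ h𝔷 => ⟨Filter.mem_of_superset h𝔷.1 hBC, h𝔷.2⟩)
    fun B hB => exists_lt_of_distOf_lt ((le_appConv hB).trans_lt hc)
  have hm : mU 𝒳 = 𝔶 := eq_of_le fun B hB =>
    mem_mU.2 (Filter.mem_of_superset (h𝒳 B hB) fun _ h => h.1)
  have hclose : uExt a 𝒳 (pure y) ≤ c := by
    simpa only [map_id, map_const] using uExt_map_map_le (f := id) (g := fun _ => y)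
      (Filter.mem_of_superset (h𝒳 _ Filter.univ_mem) fun _ h => h.2.le)
  calc a 𝔶 y = a (mU 𝒳) y := by rw [hm]
    _ ≤ uExt a 𝒳 (pure y) + a (pure y) y := ha.mU_le _ _ _
    _ ≤ c := by rw [ha.pure_self, add_zero]; exact hclose

end IsApproachConvergence

end Convergence

section Product

variable {W X Y : Type*} {a : Ultrafilter X → X → ℝ≥0∞} {b : Ultrafilter Y → Y → ℝ≥0∞}
  {w : Ultrafilter W → W → ℝ≥0∞}

def prodConv (a : Ultrafilter X → X → ℝ≥0∞) (b : Ultrafilter Y → Y → ℝ≥0∞) :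
    Ultrafilter (X × Y) → X × Y → ℝ≥0∞ :=
  fun 𝔴 p => max (a (map Prod.fst 𝔴) p.1) (b (map Prod.snd 𝔴) p.2)

theorem isContraction_fst : IsContraction (prodConv a b) a Prod.fst :=
  fun _ _ => le_max_left _ _

theorem isContraction_snd : IsContraction (prodConv a b) b Prod.snd :=
  fun _ _ => le_max_right _ _

theorem IsContraction.prodMk {f : W → X} {g : W → Y} (hf : IsContraction w a f)
    (hg : IsContraction w b g) : IsContraction w (prodConv a b) fun v => (f v, g v) :=
  fun 𝔴 v => max_le (hf 𝔴 v) (hg 𝔴 v)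

theorem isContraction_const {x : X} (hx : a (pure x) x = 0) :
    IsContraction b a fun _ => x :=
  fun 𝔶 _ => by rw [map_const, hx]; exact zero_le

theorem isApproachConvergence_prodConv (ha : IsApproachConvergence a)
    (hb : IsApproachConvergence b) : IsApproachConvergence (prodConv a b) where
  pure_self p := by simp only [prodConv, map_pure, ha.pure_self, hb.pure_self, max_self]
  mU_le 𝔚 𝔴 p := max_le
    ((ha.mU_le (map (map Prod.fst) 𝔚) (map Prod.fst 𝔴) p.1).trans
      (add_le_add (isContraction_fst.uExt_map_map_le 𝔚 𝔴) (le_max_left _ _)))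
    ((hb.mU_le (map (map Prod.snd) 𝔚) (map Prod.snd 𝔴) p.2).trans
      (add_le_add (isContraction_snd.uExt_map_map_le 𝔚 𝔴) (le_max_right _ _)))

end Product

def ExponentiabilityCondition {X : Type*} (a : Ultrafilter X → X → ℝ≥0∞) : Prop :=
  ∀ (𝔛 : Ultrafilter (Ultrafilter X)) (x₀ : X) (u v : ℝ≥0∞),
    ⨅ 𝔵 : Ultrafilter X, (max u (a 𝔵 x₀) + max v (uExt a 𝔛 𝔵)) ≤ max (u + v) (a (mU 𝔛) x₀)

section Exponential

variable {X Z : Type*} (a : Ultrafilter X → X → ℝ≥0∞) (c : Ultrafilter Z → Z → ℝ≥0∞)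

def Contraction : Type _ := {k : X → Z // IsContraction a c k}

def Contraction.eval (p : Contraction a c × X) : Z := p.1.1 p.2

def expConv (𝔭 : Ultrafilter (Contraction a c)) (h : Contraction a c) : ℝ≥0∞ :=
  ⨆ (𝔴 : Ultrafilter (Contraction a c × X)) (_ : map Prod.fst 𝔴 = 𝔭) (x : X)
    (_ : a (map Prod.snd 𝔴) x < c (map (Contraction.eval a c) 𝔴) (h.1 x)),
    c (map (Contraction.eval a c) 𝔴) (h.1 x)

variable {a c} {W : Type*} {w : Ultrafilter W → W → ℝ≥0∞}

theorem expConv_le_iff {𝔭 : Ultrafilter (Contraction a c)} {h : Contraction a c} {γ : ℝ≥0∞} :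
    expConv a c 𝔭 h ≤ γ ↔ ∀ 𝔴 : Ultrafilter (Contraction a c × X), map Prod.fst 𝔴 = 𝔭 →
      ∀ x, c (map (Contraction.eval a c) 𝔴) (h.1 x) ≤ max γ (a (map Prod.snd 𝔴) x) := by
  simp only [expConv, iSup_le_iff, le_max_iff, ← not_le (b := a _ _), or_iff_not_imp_right]

theorem conv_map_eval_le (𝔴 : Ultrafilter (Contraction a c × X)) (h : Contraction a c) (x : X) :
    c (map (Contraction.eval a c) 𝔴) (h.1 x) ≤
      max (expConv a c (map Prod.fst 𝔴) h) (a (map Prod.snd 𝔴) x) :=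
  expConv_le_iff.1 le_rfl 𝔴 rfl x

theorem expConv_pure_self (h : Contraction a c) : expConv a c (pure h) h = 0 := by
  refine le_antisymm (expConv_le_iff.2 fun 𝔴 h𝔴 x => ?_) zero_le
  have hfst : ∀ᶠ p : Contraction a c × X in 𝔴, p.1 = h :=
    mem_map.1 (h𝔴 ▸ mem_pure.2 (Set.mem_singleton h))
  have heval : map (Contraction.eval a c) 𝔴 = map h.1 (map Prod.snd 𝔴) :=
    map_congr (hfst.mono fun p hp => by simp only [Contraction.eval, hp])
  rw [heval]
  exact le_max_of_le_right (h.2 _ x)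

theorem conv_map_eval_mU_le (hc : IsApproachConvergence c)
    (𝒲 : Ultrafilter (Ultrafilter (Contraction a c × X))) (𝔭 : Ultrafilter (Contraction a c))
    (h : Contraction a c) (x₀ : X) (𝔵 : Ultrafilter X) :
    c (map (Contraction.eval a c) (mU 𝒲)) (h.1 x₀) ≤
      max (uExt (expConv a c) (map (map Prod.fst) 𝒲) 𝔭) (uExt a (map (map Prod.snd) 𝒲) 𝔵) +
        max (expConv a c 𝔭 h) (a 𝔵 x₀) := by
  refine le_add_of_forall_lt_imp_le_add fun b hb => ?_
  -- `𝔘` pairs `𝒲`-almost every `𝔴` with some `(k, x)` to which `π₁ 𝔴` and `π₂ 𝔴` converge up to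
  -- `b`; its image `π₂ 𝔘` lies over `𝔭` and `𝔵`, and transitivity of `c` passes through it
  obtain ⟨𝔘, h𝒲, h𝔭, h𝔵, hclose⟩ := exists_coupling₃
    (R := fun 𝔴 k => expConv a c (map Prod.fst 𝔴) k < b)
    (S := fun 𝔴 x => a (map Prod.snd 𝔴) x < b)
    (fun _ hP => eventually_exists_lt_of_uExt_lt ((le_max_left _ _).trans_lt hb) hP)
    (fun _ hA => eventually_exists_lt_of_uExt_lt ((le_max_right _ _).trans_lt hb) hA)
  have hcoupled : uExt c (map (map (Contraction.eval a c)) 𝒲)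
      (map (Contraction.eval a c) (map Prod.snd 𝔘)) ≤ b := by
    rw [← h𝒲, map_map, map_map]
    exact uExt_map_map_le (hclose.mono fun t ht =>
      (conv_map_eval_le t.1 t.2.1 t.2.2).trans (max_le ht.1.le ht.2.le))
  have hlimit := conv_map_eval_le (map Prod.snd 𝔘) h x₀
  rw [h𝔭, h𝔵] at hlimit
  calc c (map (Contraction.eval a c) (mU 𝒲)) (h.1 x₀)
      = c (mU (map (map (Contraction.eval a c)) 𝒲)) (h.1 x₀) := by rw [map_mU]
    _ ≤ _ := hc.mU_le _ (map (Contraction.eval a c) (map Prod.snd 𝔘)) _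
    _ ≤ b + max (expConv a c 𝔭 h) (a 𝔵 x₀) := add_le_add hcoupled hlimit

theorem isApproachConvergence_expConv (ha : ExponentiabilityCondition a)
    (hc : IsApproachConvergence c) : IsApproachConvergence (expConv a c) where
  pure_self := expConv_pure_self
  mU_le 𝔓 𝔭 h := expConv_le_iff.2 fun 𝔚 h𝔚 x₀ => by
    obtain ⟨𝒲, rfl, rfl⟩ := exists_mU_eq_and_map_map_eq Prod.fst h𝔚
    calc c (map (Contraction.eval a c) (mU 𝒲)) (h.1 x₀)
        ≤ ⨅ 𝔵, (max (expConv a c 𝔭 h) (a 𝔵 x₀) +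
            max (uExt (expConv a c) (map (map Prod.fst) 𝒲) 𝔭)
              (uExt a (map (map Prod.snd) 𝒲) 𝔵)) :=
          le_iInf fun 𝔵 => (conv_map_eval_mU_le hc 𝒲 𝔭 h x₀ 𝔵).trans_eq (add_comm _ _)
      _ ≤ _ := ha _ x₀ _ _
      _ = _ := by rw [add_comm, ← map_mU]

theorem isContraction_prodMk_left {v : W} (hv : w (pure v) v = 0) :
    IsContraction a (prodConv w a) (Prod.mk v) :=
  (isContraction_const hv).prodMk fun _ _ => le_rfl

def curryContraction {g : W × X → Z} (hw : IsApproachConvergence w)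
    (hg : IsContraction (prodConv w a) c g) (v : W) : Contraction a c :=
  ⟨fun x => g (v, x), hg.comp (isContraction_prodMk_left (hw.pure_self v))⟩

theorem isContraction_curryContraction {g : W × X → Z} (hw : IsApproachConvergence w)
    (hg : IsContraction (prodConv w a) c g) :
    IsContraction w (expConv a c) (curryContraction hw hg) :=
  fun 𝔴₀ v => expConv_le_iff.2 fun 𝔴 h𝔴 x => by
    obtain ⟨𝔴', rfl, h𝔴'⟩ := exists_map_prodMap_eq (curryContraction hw hg) 𝔴 𝔴₀ h𝔴.symm
    exact h𝔴' ▸ hg 𝔴' (v, x)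

theorem IsContraction.uncurry {k : W → Contraction a c} (hk : IsContraction w (expConv a c) k) :
    IsContraction (prodConv w a) c fun p => (k p.1).1 p.2 :=
  fun 𝔴 p => (conv_map_eval_le (map (Prod.map k id) 𝔴) (k p.1) p.2).trans
    (max_le_max (hk (map Prod.fst 𝔴) p.1) le_rfl)

end Exponential

namespace AppSpace

def ofConvergence (Y : Type) (a : Ultrafilter Y → Y → ℝ≥0∞) (ha : IsApproachConvergence a) :
    AppSpace :=
  ⟨Y, distOf a, ha.isApproachDistance_distOf⟩

theorem appConv_ofConvergence {Y : Type} {a : Ultrafilter Y → Y → ℝ≥0∞}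
    (ha : IsApproachConvergence a) : appConv (ofConvergence Y a ha).dist = a :=
  ha.appConv_distOf

def prod (B C : AppSpace) : AppSpace :=
  ofConvergence (B.carrier × C.carrier) (prodConv (appConv B.dist) (appConv C.dist))
    (isApproachConvergence_prodConv B.isApproachDistance.isApproachConvergence_appConv
      C.isApproachDistance.isApproachConvergence_appConv)

variable {B C W : AppSpace}

theorem appConv_prod :
    appConv (prod B C).dist = prodConv (appConv B.dist) (appConv C.dist) :=
  appConv_ofConvergence _

def fst : prod B C ⟶ B := ⟨Prod.fst, appConv_prod ▸ isContraction_fst⟩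

def snd : prod B C ⟶ C := ⟨Prod.snd, appConv_prod ▸ isContraction_snd⟩

def lift (f : W ⟶ B) (g : W ⟶ C) : W ⟶ prod B C :=
  ⟨fun v => (f.1 v, g.1 v), appConv_prod ▸ f.2.prodMk g.2⟩

theorem isProductCone_fst_snd : IsProductCone (fst : prod B C ⟶ B) snd := by
  refine fun W f g => ⟨lift f g, ⟨rfl, rfl⟩, fun h ⟨hf, hg⟩ => Subtype.ext (funext fun v => ?_)⟩
  exact Prod.ext (congrFun (congrArg Subtype.val hf) v) (congrFun (congrArg Subtype.val hg) v)

variable (X : AppSpace)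

def prodFunctor : AppSpace ⥤ AppSpace where
  obj Z := prod Z X
  map f := lift (fst ≫ f) snd

variable {X} (hX : ExponentiabilityCondition (appConv X.dist))

def exp (Z : AppSpace) : AppSpace :=
  ofConvergence (Contraction (appConv X.dist) (appConv Z.dist))
    (expConv (appConv X.dist) (appConv Z.dist))
    (isApproachConvergence_expConv hX Z.isApproachDistance.isApproachConvergence_appConv)

theorem appConv_exp (Z : AppSpace) :
    appConv (exp hX Z).dist = expConv (appConv X.dist) (appConv Z.dist) :=
  appConv_ofConvergence _

def curryEquiv (W Z : AppSpace) : (prod W X ⟶ Z) ≃ (W ⟶ exp hX Z) where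
  toFun g := ⟨curryContraction W.isApproachDistance.isApproachConvergence_appConv
      (appConv_prod ▸ g.2), by rw [appConv_exp]; exact isContraction_curryContraction _ _⟩
  invFun k := ⟨fun p => (k.1 p.1).1 p.2, by
    rw [appConv_prod]
    exact IsContraction.uncurry (k := k.1) (appConv_exp hX Z ▸ k.2)⟩
  left_inv _ := rfl
  right_inv _ := rfl

def expFunctor : AppSpace ⥤ AppSpace :=
  Adjunction.rightAdjointOfEquiv (F := prodFunctor X) (curryEquiv hX) fun _ _ _ _ _ => rfl

def prodExpAdjunction : prodFunctor X ⊣ expFunctor hX :=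
  Adjunction.adjunctionOfEquivRight _ _

end AppSpace

/-- If the ultrafilter convergence `a` of an approach space `(X, δ)` satisfies
`(u + v) ∨ a (m_X 𝔛) x₀ ≥ ⨅_{𝔵 ∈ U X} ((u ∨ a 𝔵 x₀) + (v ∨ Ū a 𝔛 𝔵))` for all `𝔛`, `x₀`, `u`, `v`,
then `X` is exponentiable in `App`. -/
theorem exponentiable_sufficient (X : Type) (δ : Set X → X → ℝ≥0∞)
    (hδ : IsApproachDistance δ)
    (a : Ultrafilter X → X → ℝ≥0∞) (ha : ∀ (𝔵 : Ultrafilter X) (x : X), a 𝔵 x = ⨆ A ∈ 𝔵, δ A x)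
    (hcond : ∀ (𝔛 : Ultrafilter (Ultrafilter X)) (x₀ : X) (u v : ℝ≥0∞),
      ⨅ 𝔵 : Ultrafilter X, (max u (a 𝔵 x₀) + max v (uExt a 𝔛 𝔵)) ≤
        max (u + v) (a (mU 𝔛) x₀)) :
    AppExponentiable ⟨X, δ, hδ⟩ := by
  obtain rfl : a = appConv δ := funext₂ ha
  exact ⟨_, _, AppSpace.prodExpAdjunction (X := ⟨X, δ, hδ⟩) hcond, fun _ => AppSpace.fst,
    fun _ => AppSpace.snd, fun _ => AppSpace.isProductCone_fst_snd, fun _ _ _ => ⟨rfl, rfl⟩⟩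

end
end

section
/- For every numerical relation r : X ⇸ Y, every 𝔵 ∈ U X and every 𝔶 ∈ U Y, Ū r (𝔵, 𝔶) = inf { ξ (U r' 𝔴) | 𝔴 ∈ U (X × Y), U π₁ 𝔴 = 𝔵, U π₂ 𝔴 = 𝔶 }, where r' : X × Y → ℝ≥0∞ is r viewed as a function and U r' 𝔴 is its pushforward ultrafilter. -/
open scoped ENNReal
open CategoryTheory

noncomputable section

/-! `Ū r (𝔵, 𝔶)` is the liminf of `r` along `𝔵 ×ˢ 𝔶` and `ξ (U r' 𝔴)` is its liminf along `𝔴`.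
The ultrafilters on `X × Y` with marginals `𝔵` and `𝔶` are exactly those finer than `𝔵 ×ˢ 𝔶`,
and in `[0, ∞]` the liminf along a filter is a cluster point, hence the limit along some finer
ultrafilter; so the infimum is attained. -/

open Filter

theorem Filter.isLeast_liminf_ultrafilter {α β : Type*} [CompleteLinearOrder α]
    [TopologicalSpace α] [OrderTopology α] (u : β → α) (F : Filter β) [F.NeBot] :
    IsLeast {w | ∃ U : Ultrafilter β, ↑U ≤ F ∧ liminf u U = w} (liminf u F) := by
  refine ⟨?_, fun w ⟨U, hUF, hw⟩ => hw ▸ liminf_le_liminf_of_le hUF⟩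
  obtain ⟨U, hUF, hU⟩ := mapClusterPt_iff_ultrafilter.mp (MapClusterPt.liminf (u := u) (f := F))
  exact ⟨U, hUF, hU.liminf_eq⟩

theorem Ultrafilter.coe_le_prod_iff {X Y : Type*} (𝔴 : Ultrafilter (X × Y))
    (𝔵 : Ultrafilter X) (𝔶 : Ultrafilter Y) :
    (𝔴 : Filter (X × Y)) ≤ (𝔵 : Filter X) ×ˢ (𝔶 : Filter Y) ↔
      Ultrafilter.map Prod.fst 𝔴 = 𝔵 ∧ Ultrafilter.map Prod.snd 𝔴 = 𝔶 := by
  simp only [le_prod, Tendsto, ← Ultrafilter.coe_map, Ultrafilter.coe_le_coe]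

theorem xi_map_eq_liminf {α : Type*} (f : α → ℝ≥0∞) (𝔴 : Ultrafilter α) :
    xi (Ultrafilter.map f 𝔴) = liminf f 𝔴 :=
  (liminf_eq_iSup_iInf (u := id) (f := (Ultrafilter.map f 𝔴 : Filter ℝ≥0∞))).symm

theorem uExt_eq_liminf_prod {X Y : Type*} (r : X → Y → ℝ≥0∞) (𝔵 : Ultrafilter X)
    (𝔶 : Ultrafilter Y) :
    uExt r 𝔵 𝔶 = liminf (fun p : X × Y => r p.1 p.2) ((𝔵 : Filter X) ×ˢ (𝔶 : Filter Y)) := by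
  rw [((𝔵 : Filter X).basis_sets.prod (𝔶 : Filter Y).basis_sets).liminf_eq_iSup_iInf, uExt]
  simp only [iSup_prod, iSup_and, id, biInf_prod']
  exact iSup_congr fun _ => iSup_comm

/-- For every numerical relation `r : X ⇸ Y`, `𝔵 ∈ U X` and `𝔶 ∈ U Y`,
`Ū r (𝔵, 𝔶) = inf {ξ (U r' 𝔴) | 𝔴 ∈ U (X × Y), U π₁ 𝔴 = 𝔵, U π₂ 𝔴 = 𝔶}`. -/
theorem uExt_eq_inf_xi (X Y : Type*) (r : X → Y → ℝ≥0∞)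
    (𝔵 : Ultrafilter X) (𝔶 : Ultrafilter Y) :
    uExt r 𝔵 𝔶 = sInf {w : ℝ≥0∞ | ∃ 𝔴 : Ultrafilter (X × Y),
      Ultrafilter.map Prod.fst 𝔴 = 𝔵 ∧ Ultrafilter.map Prod.snd 𝔴 = 𝔶 ∧
      xi (Ultrafilter.map (fun p => r p.1 p.2) 𝔴) = w} := by
  simp only [xi_map_eq_liminf, ← and_assoc, ← Ultrafilter.coe_le_prod_iff]
  rw [uExt_eq_liminf_prod, (isLeast_liminf_ultrafilter _ _).csInf_eq]

end
end

section
/- For every u ∈ ℝ≥0∞ and every numerical relation r : X ⇸ Y one has Ū (u ⊙ r) = u ⊙ (Ū r), i.e. for all 𝔵 ∈ U X and 𝔶 ∈ U Y, ⨆_{A ∈ 𝔵} ⨆_{B ∈ 𝔶} ⨅_{x ∈ A} ⨅_{y ∈ B} max u (r x y) = max u (Ū r (𝔵, 𝔶)). -/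
open scoped ENNReal
open CategoryTheory

noncomputable section

theorem Filter.sup_biSup_mem_biSup_mem_biInf_biInf {X Y α : Type*} [Order.Coframe α]
    (f : Filter X) (g : Filter Y) (u : α) (r : X → Y → α) :
    u ⊔ ⨆ A ∈ f, ⨆ B ∈ g, ⨅ x ∈ A, ⨅ y ∈ B, r x y =
      ⨆ A ∈ f, ⨆ B ∈ g, ⨅ x ∈ A, ⨅ y ∈ B, u ⊔ r x y := by
  simp only [sup_biSup ⟨_, f.univ_mem⟩, sup_biSup ⟨_, g.univ_mem⟩, sup_iInf₂_eq]

/-- `Ū (u ⊙ r) = u ⊙ (Ū r)` for every `u ∈ [0,∞]` and every numerical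
relation `r : X ⇸ Y`. -/
theorem uExt_maxact (X Y : Type*) (u : ℝ≥0∞) (r : X → Y → ℝ≥0∞)
    (𝔵 : Ultrafilter X) (𝔶 : Ultrafilter Y) :
    uExt (fun x y => max u (r x y)) 𝔵 𝔶 = max u (uExt r 𝔵 𝔶) := by
  simpa only [uExt, ← Ultrafilter.mem_coe] using
    (Filter.sup_biSup_mem_biSup_mem_biInf_biInf (𝔵 : Filter X) 𝔶 u r).symm

end
end

section
/- The monad multiplication m remains a natural transformation m : Ū Ū → Ū on numerical relations: for every numerical relation r : X ⇸ Y, every 𝔛 ∈ U(U X) and every 𝔶 ∈ U Y, Ū r (m_X 𝔛) 𝔶 = inf { Ū(Ū r) 𝔛 𝔜 | 𝔜 ∈ U(U Y), m_Y 𝔜 = 𝔶 }. -/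
open scoped ENNReal
open CategoryTheory

noncomputable section

lemma mem_mU' {X : Type*} {𝔛 : Ultrafilter (Ultrafilter X)} {A : Set X} :
    A ∈ mU 𝔛 ↔ {𝔞 : Ultrafilter X | A ∈ 𝔞} ∈ 𝔛 := Iff.rfl

lemma le_uExt' {X Y : Type*} {r : X → Y → ℝ≥0∞} {𝔵 : Ultrafilter X} {𝔶 : Ultrafilter Y}
    {A : Set X} {B : Set Y} (hA : A ∈ 𝔵) (hB : B ∈ 𝔶) :
    (⨅ x ∈ A, ⨅ y ∈ B, r x y) ≤ uExt r 𝔵 𝔶 :=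
  le_iSup₂_of_le A hA (le_iSup₂_of_le B hB le_rfl)

lemma uExt_le' {X Y : Type*} {r : X → Y → ℝ≥0∞} {𝔵 : Ultrafilter X} {𝔶 : Ultrafilter Y}
    {E : ℝ≥0∞} (h : ∀ A ∈ 𝔵, ∀ B ∈ 𝔶, ∃ x ∈ A, ∃ y ∈ B, r x y ≤ E) :
    uExt r 𝔵 𝔶 ≤ E := by
  refine iSup₂_le fun A hA => iSup₂_le fun B hB => ?_
  obtain ⟨x, hx, y, hy, hr⟩ := h A hA B hB
  exact le_trans (iInf₂_le_of_le x hx (iInf₂_le_of_le y hy le_rfl)) hr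

lemma exists_lt_of_iInf₂_lt' {X Y : Type*} {r : X → Y → ℝ≥0∞} {A : Set X} {B : Set Y}
    {E : ℝ≥0∞} (h : (⨅ x ∈ A, ⨅ y ∈ B, r x y) < E) : ∃ x ∈ A, ∃ y ∈ B, r x y < E := by
  by_contra hc
  push_neg at hc
  exact absurd (le_iInf₂ fun x hx => le_iInf₂ fun y hy => hc x hx y hy) (not_le.2 h)

/-- The multiplication `m` remains a natural transformation `Ū Ū → Ū` on
numerical relations: `Ū r (m_X 𝔛) 𝔶 = inf {Ū (Ū r) 𝔛 𝔜 | 𝔜 ∈ U (U Y), m_Y 𝔜 = 𝔶}`. -/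
theorem uExt_mU_naturality (X Y : Type*) (r : X → Y → ℝ≥0∞)
    (𝔛 : Ultrafilter (Ultrafilter X)) (𝔶 : Ultrafilter Y) :
    uExt r (mU 𝔛) 𝔶 = sInf {c : ℝ≥0∞ | ∃ 𝔜 : Ultrafilter (Ultrafilter Y),
      mU 𝔜 = 𝔶 ∧ uExt (uExt r) 𝔛 𝔜 = c} := by
  apply le_antisymm
  · refine le_sInf ?_
    rintro c ⟨𝔜, rfl, rfl⟩
    refine iSup₂_le fun A hA => iSup₂_le fun B hB => ?_
    refine le_trans ?_ (le_uExt' (mem_mU'.1 hA) (mem_mU'.1 hB))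
    exact le_iInf₂ fun 𝔞 h𝔞 => le_iInf₂ fun 𝔟 h𝔟 => le_uExt' h𝔞 h𝔟
  · refine ENNReal.le_of_forall_pos_le_add fun ε hε hd => ?_
    set d := uExt r (mU 𝔛) 𝔶 with hdd
    set E := d + (ε : ℝ≥0∞) with hEE
    have hdE : d < E := ENNReal.lt_add_right hd.ne (by exact_mod_cast hε.ne')
    -- Step 1: for each B ∈ 𝔶 the set of x admitting y ∈ B with r x y < E is in mU 𝔛
    have hC : ∀ B ∈ 𝔶, {x : X | ∃ y ∈ B, r x y < E} ∈ mU 𝔛 := by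
      intro B hB
      by_contra hcon
      have h1 : {x : X | ∃ y ∈ B, r x y < E}ᶜ ∈ mU 𝔛 :=
        Ultrafilter.compl_mem_iff_notMem.2 hcon
      obtain ⟨x, hx, y, hy, hr⟩ := exists_lt_of_iInf₂_lt' (lt_of_le_of_lt (le_uExt' h1 hB) hdE)
      exact hx ⟨y, hy, hr⟩
    -- Step 2: key existence
    have key : ∀ B ∈ 𝔶, ∀ 𝒜 ∈ 𝔛, ∃ 𝔟 : Ultrafilter Y, B ∈ 𝔟 ∧ ∃ 𝔞 ∈ 𝒜, uExt r 𝔞 𝔟 ≤ E := by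
      intro B hB 𝒜 h𝒜
      obtain ⟨𝔞, h𝔞⟩ :=
        Ultrafilter.nonempty_of_mem (Filter.inter_mem (mem_mU'.1 (hC B hB)) h𝒜)
      have himg : Monotone (fun A : Set X => {y ∈ B | ∃ x ∈ A, r x y < E}) :=
        fun A A' hAA' y hy => ⟨hy.1, hy.2.imp fun x hx => ⟨hAA' hx.1, hx.2⟩⟩
      have hne : Filter.NeBot
          ((𝔞 : Filter X).lift' (fun A : Set X => {y ∈ B | ∃ x ∈ A, r x y < E})) := by
        rw [Filter.lift'_neBot_iff himg]
        intro A hA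
        obtain ⟨x, hxA, hxC⟩ := Ultrafilter.nonempty_of_mem (Filter.inter_mem hA h𝔞.1)
        obtain ⟨y, hyB, hr⟩ := hxC
        exact ⟨y, hyB, x, hxA, hr⟩
      obtain ⟨𝔟, h𝔟⟩ :=
        Ultrafilter.exists_le ((𝔞 : Filter X).lift' (fun A : Set X => {y ∈ B | ∃ x ∈ A, r x y < E}))
      refine ⟨𝔟, ?_, 𝔞, h𝔞.2, ?_⟩
      · exact Filter.mem_of_superset (h𝔟 (Filter.mem_lift' Filter.univ_mem)) fun y hy => hy.1
      · refine uExt_le' fun A hA B' hB' => ?_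
        have hmem : {y ∈ B | ∃ x ∈ A, r x y < E} ∈ 𝔟 := h𝔟 (Filter.mem_lift' hA)
        obtain ⟨y, hy1, hy2⟩ := Ultrafilter.nonempty_of_mem (Filter.inter_mem hmem hB')
        obtain ⟨x, hxA, hr⟩ := hy1.2
        exact ⟨x, hxA, y, hy2, hr.le⟩
    -- Step 3: build 𝔜
    have hshar : Monotone (fun B : Set Y => {𝔟 : Ultrafilter Y | B ∈ 𝔟}) :=
      fun B B' h 𝔟 hB => Filter.mem_of_superset hB h
    have hT : Monotone (fun 𝒜 : Set (Ultrafilter X) =>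
        {𝔟 : Ultrafilter Y | ∃ 𝔞 ∈ 𝒜, uExt r 𝔞 𝔟 ≤ E}) :=
      fun 𝒜 𝒜' h 𝔟 h𝔟 => h𝔟.imp fun 𝔞 h𝔞 => ⟨h h𝔞.1, h𝔞.2⟩
    have hFne : Filter.NeBot
        ((𝔶 : Filter Y).lift' (fun B : Set Y => {𝔟 : Ultrafilter Y | B ∈ 𝔟}) ⊓
          (𝔛 : Filter (Ultrafilter X)).lift' (fun 𝒜 : Set (Ultrafilter X) =>
            {𝔟 : Ultrafilter Y | ∃ 𝔞 ∈ 𝒜, uExt r 𝔞 𝔟 ≤ E})) := by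
      rw [Filter.inf_neBot_iff]
      intro s hs t ht
      obtain ⟨B, hB, hBs⟩ := (Filter.mem_lift'_sets hshar).1 hs
      obtain ⟨𝒜, h𝒜, h𝒜t⟩ := (Filter.mem_lift'_sets hT).1 ht
      obtain ⟨𝔟, hB𝔟, h𝔞⟩ := key B hB 𝒜 h𝒜
      exact ⟨𝔟, hBs hB𝔟, h𝒜t h𝔞⟩
    obtain ⟨𝔜, h𝔜⟩ :=
      Ultrafilter.exists_le
        ((𝔶 : Filter Y).lift' (fun B : Set Y => {𝔟 : Ultrafilter Y | B ∈ 𝔟}) ⊓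
          (𝔛 : Filter (Ultrafilter X)).lift' (fun 𝒜 : Set (Ultrafilter X) =>
            {𝔟 : Ultrafilter Y | ∃ 𝔞 ∈ 𝒜, uExt r 𝔞 𝔟 ≤ E}))
    have hm : mU 𝔜 = 𝔶 := by
      refine Ultrafilter.coe_le_coe.1 fun B hB => ?_
      exact mem_mU'.2 (h𝔜 (Filter.mem_inf_of_left (Filter.mem_lift' hB)))
    have hle : uExt (uExt r) 𝔛 𝔜 ≤ E := by
      refine uExt_le' fun 𝒜 h𝒜 ℬ hℬ => ?_
      have hT𝒜 : {𝔟 : Ultrafilter Y | ∃ 𝔞 ∈ 𝒜, uExt r 𝔞 𝔟 ≤ E} ∈ 𝔜 :=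
        h𝔜 (Filter.mem_inf_of_right (Filter.mem_lift' h𝒜))
      obtain ⟨𝔟, h𝔟T, h𝔟ℬ⟩ := Ultrafilter.nonempty_of_mem (Filter.inter_mem hT𝒜 hℬ)
      obtain ⟨𝔞, h𝔞, hr⟩ := h𝔟T
      exact ⟨𝔞, h𝔞, 𝔟, h𝔟ℬ, hr⟩
    exact le_trans (sInf_le ⟨𝔜, hm, rfl⟩) hle


end
end

section
/- The extension Ū is functorial on numerical relations: for all numerical relations r : X ⇸ Y and s : Y ⇸ Z, Ū(s · r) = (Ū s) · (Ū r), i.e. for all 𝔵 ∈ U X and 𝔷 ∈ U Z, Ū(s · r)(𝔵, 𝔷) = ⨅_{𝔶 ∈ U Y} ( Ū r (𝔵, 𝔶) + Ū s (𝔶, 𝔷) ). -/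
/-! If `Ū r (𝔵, 𝔶) < a` and `A ∈ 𝔵`, the points `y` reached from `A` at `r`-cost below `a` form a
set in `𝔶` (otherwise its complement would witness `Ū r (𝔵, 𝔶) ≥ a`); the same holds for `s`, and a
point common to both sets lies on a path of cost below `a + b`. Hence `Ū (s · r) ≤ Ū r + Ū s`
through every `𝔶`.

Conversely, for `d = Ū (s · r) (𝔵, 𝔷) < ∞`, the midpoints `y` of paths `x → y → z` with `x ∈ A`,
`z ∈ C` and cost below `a > d` form nonempty sets, downward directed in `(A, C, a)`, so a single
ultrafilter `𝔶` contains all of them, and this `𝔶` attains `Ū r (𝔵, 𝔶) + Ū s (𝔶, 𝔷) ≤ d`. -/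

open scoped ENNReal
open CategoryTheory

noncomputable section

open Filter

theorem le_add_of_forall_gt_imp_le_add_of_dense {α : Type*} [LinearOrder α] [DenselyOrdered α]
    [AddCommSemigroup α] [Sub α] [OrderedSub α] {a b c : α}
    (h : ∀ a' b', a < a' → b < b' → c ≤ a' + b') : c ≤ a + b := by
  refine tsub_le_iff_left.1 <| le_of_forall_gt_imp_ge_of_dense fun b' hb' => ?_
  refine tsub_le_iff_left.2 <| tsub_le_iff_right.1 <|
    le_of_forall_gt_imp_ge_of_dense fun a' ha' => ?_
  exact tsub_le_iff_right.2 (h a' b' ha' hb')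

theorem Ultrafilter.exists_forall_mem_of_directed {α ι : Type*} [Nonempty ι] {S : ι → Set α}
    (hS : Directed (· ⊇ ·) S) (hne : ∀ i, (S i).Nonempty) :
    ∃ 𝔶 : Ultrafilter α, ∀ i, S i ∈ 𝔶 := by
  have : (⨅ i, 𝓟 (S i)).NeBot :=
    iInf_neBot_of_directed' (hS.mono_comp (g := principal) _ fun _ _ => principal_mono.2)
      fun i => principal_neBot_iff.2 (hne i)
  exact ⟨Ultrafilter.of _, fun i =>
    Ultrafilter.of_le _ (mem_iInf_of_mem i (mem_principal_self _))⟩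

section NumericalRelation

variable {X Y Z : Type*}

def relComp (r : X → Y → ℝ≥0∞) (s : Y → Z → ℝ≥0∞) (x : X) (z : Z) : ℝ≥0∞ :=
  ⨅ y, r x y + s y z

theorem uExt_flip (s : Y → Z → ℝ≥0∞) (𝔶 : Ultrafilter Y) (𝔷 : Ultrafilter Z) :
    uExt (flip s) 𝔷 𝔶 = uExt s 𝔶 𝔷 := by
  simp only [uExt, flip]
  rw [iSup₂_comm (f := fun C _ B _ => ⨅ z ∈ C, ⨅ y ∈ B, s y z)]
  simp only [iInf₂_comm (f := fun z (_ : z ∈ _) y (_ : y ∈ _) => s y z)]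

theorem biInf_biInf_le_uExt (r : X → Y → ℝ≥0∞) {𝔵 : Ultrafilter X} {𝔶 : Ultrafilter Y}
    {A : Set X} {B : Set Y} (hA : A ∈ 𝔵) (hB : B ∈ 𝔶) :
    ⨅ x ∈ A, ⨅ y ∈ B, r x y ≤ uExt r 𝔵 𝔶 :=
  le_iSup₂_of_le (f := fun A _ => ⨆ B ∈ 𝔶, ⨅ x ∈ A, ⨅ y ∈ B, r x y) A hA
    (le_iSup₂ (f := fun B _ => ⨅ x ∈ A, ⨅ y ∈ B, r x y) B hB)

theorem setOf_exists_lt_mem_of_uExt_lt {r : X → Y → ℝ≥0∞} {𝔵 : Ultrafilter X}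
    {𝔶 : Ultrafilter Y} {A : Set X} {a : ℝ≥0∞} (hA : A ∈ 𝔵) (ha : uExt r 𝔵 𝔶 < a) :
    {y | ∃ x ∈ A, r x y < a} ∈ 𝔶 := by
  by_contra h
  refine ha.not_ge ?_
  calc a ≤ ⨅ x ∈ A, ⨅ y ∈ {y | ∃ x ∈ A, r x y < a}ᶜ, r x y :=
        le_iInf₂ fun x hx => le_iInf₂ fun y hy => not_lt.1 fun hlt => hy ⟨x, hx, hlt⟩
    _ ≤ uExt r 𝔵 𝔶 := biInf_biInf_le_uExt r hA (Ultrafilter.compl_mem_iff_notMem.2 h)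

theorem uExt_relComp_le_add (r : X → Y → ℝ≥0∞) (s : Y → Z → ℝ≥0∞) (𝔵 : Ultrafilter X)
    (𝔶 : Ultrafilter Y) (𝔷 : Ultrafilter Z) :
    uExt (relComp r s) 𝔵 𝔷 ≤ uExt r 𝔵 𝔶 + uExt s 𝔶 𝔷 := by
  refine iSup₂_le fun A hA => iSup₂_le fun C hC =>
    le_add_of_forall_gt_imp_le_add_of_dense fun a b ha hb => ?_
  rw [← uExt_flip] at hb
  obtain ⟨y, ⟨x, hx, hxy⟩, z, hz, hyz⟩ := Ultrafilter.nonempty_of_mem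
    (inter_mem (setOf_exists_lt_mem_of_uExt_lt hA ha) (setOf_exists_lt_mem_of_uExt_lt hC hb))
  calc ⨅ x ∈ A, ⨅ z ∈ C, relComp r s x z ≤ r x y + s y z :=
        iInf₂_le_of_le x hx <| iInf₂_le_of_le z hz <| iInf_le _ y
    _ ≤ a + b := add_le_add hxy.le hyz.le

theorem exists_ultrafilter_forall_setOf_exists_lt_mem (r : X → Y → ℝ≥0∞) (s : Y → Z → ℝ≥0∞)
    (𝔵 : Ultrafilter X) (𝔷 : Ultrafilter Z) (hd : uExt (relComp r s) 𝔵 𝔷 ≠ ⊤) :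
    ∃ 𝔶 : Ultrafilter Y, ∀ A ∈ 𝔵, ∀ C ∈ 𝔷, ∀ a, uExt (relComp r s) 𝔵 𝔷 < a →
      {y | ∃ x ∈ A, ∃ z ∈ C, r x y + s y z < a} ∈ 𝔶 := by
  let ι := {p : Set X × Set Z × ℝ≥0∞ // p.1 ∈ 𝔵 ∧ p.2.1 ∈ 𝔷 ∧ uExt (relComp r s) 𝔵 𝔷 < p.2.2}
  have : Nonempty ι := ⟨⟨(Set.univ, Set.univ, ⊤), univ_mem, univ_mem, hd.lt_top⟩⟩
  let S : ι → Set Y := fun p => {y | ∃ x ∈ p.1.1, ∃ z ∈ p.1.2.1, r x y + s y z < p.1.2.2}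
  have hS : Directed (· ⊇ ·) S := by
    rintro ⟨⟨A, C, a⟩, hA, hC, ha⟩ ⟨⟨A', C', a'⟩, hA', hC', ha'⟩
    refine ⟨⟨(A ∩ A', C ∩ C', min a a'), inter_mem hA hA', inter_mem hC hC', lt_min ha ha'⟩,
      ?_, ?_⟩
    · rintro y ⟨x, hx, z, hz, hlt⟩
      exact ⟨x, hx.1, z, hz.1, hlt.trans_le (min_le_left _ _)⟩
    · rintro y ⟨x, hx, z, hz, hlt⟩
      exact ⟨x, hx.2, z, hz.2, hlt.trans_le (min_le_right _ _)⟩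
  have hne : ∀ p, (S p).Nonempty := by
    rintro ⟨⟨A, C, a⟩, hA, hC, ha⟩
    have : ⨅ x ∈ A, ⨅ z ∈ C, relComp r s x z < a :=
      (biInf_biInf_le_uExt (relComp r s) hA hC).trans_lt ha
    simp only [relComp, iInf_lt_iff] at this
    obtain ⟨x, hx, z, hz, y, hlt⟩ := this
    exact ⟨y, x, hx, z, hz, hlt⟩
  obtain ⟨𝔶, h𝔶⟩ := Ultrafilter.exists_forall_mem_of_directed hS hne
  exact ⟨𝔶, fun A hA C hC a ha => h𝔶 ⟨(A, C, a), hA, hC, ha⟩⟩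

theorem uExt_add_uExt_le_of_forall_setOf_exists_lt_mem {r : X → Y → ℝ≥0∞}
    {s : Y → Z → ℝ≥0∞} {𝔵 : Ultrafilter X} {𝔶 : Ultrafilter Y} {𝔷 : Ultrafilter Z}
    {d : ℝ≥0∞} (h𝔶 : ∀ A ∈ 𝔵, ∀ C ∈ 𝔷, ∀ a, d < a →
      {y | ∃ x ∈ A, ∃ z ∈ C, r x y + s y z < a} ∈ 𝔶) :
    uExt r 𝔵 𝔶 + uExt s 𝔶 𝔷 ≤ d := by
  refine ENNReal.biSup_add_biSup_le' ⟨_, univ_mem⟩ ⟨_, univ_mem⟩ fun A hA B' hB' => ?_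
  refine ENNReal.biSup_add_biSup_le' ⟨_, univ_mem⟩ ⟨_, univ_mem⟩ fun B hB C hC => ?_
  refine le_of_forall_gt_imp_ge_of_dense fun a ha => ?_
  obtain ⟨y, ⟨hyB, hyB'⟩, x, hx, z, hz, hlt⟩ :=
    Ultrafilter.nonempty_of_mem (inter_mem (inter_mem hB hB') (h𝔶 A hA C hC a ha))
  calc (⨅ x ∈ A, ⨅ y ∈ B, r x y) + ⨅ y ∈ B', ⨅ z ∈ C, s y z ≤ r x y + s y z :=
        add_le_add (iInf₂_le_of_le x hx (iInf₂_le y hyB)) (iInf₂_le_of_le y hyB' (iInf₂_le z hz))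
    _ ≤ a := hlt.le

end NumericalRelation

/-- The extension `Ū` is functorial on numerical relations:
`Ū (s · r) = (Ū s) · (Ū r)` for all `r : X ⇸ Y` and `s : Y ⇸ Z`. -/
theorem uExt_comp (X Y Z : Type*) (r : X → Y → ℝ≥0∞) (s : Y → Z → ℝ≥0∞)
    (𝔵 : Ultrafilter X) (𝔷 : Ultrafilter Z) :
    uExt (fun x z => ⨅ y : Y, (r x y + s y z)) 𝔵 𝔷 =
      ⨅ 𝔶 : Ultrafilter Y, (uExt r 𝔵 𝔶 + uExt s 𝔶 𝔷) := by
  change uExt (relComp r s) 𝔵 𝔷 = _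
  refine le_antisymm (le_iInf fun 𝔶 => uExt_relComp_le_add r s 𝔵 𝔶 𝔷) ?_
  rcases eq_or_ne (uExt (relComp r s) 𝔵 𝔷) ⊤ with hd | hd
  · rw [hd]
    exact le_top
  obtain ⟨𝔶, h𝔶⟩ := exists_ultrafilter_forall_setOf_exists_lt_mem r s 𝔵 𝔷 hd
  exact iInf_le_of_le 𝔶 (uExt_add_uExt_le_of_forall_setOf_exists_lt_mem h𝔶)

end
end

section
/- The binary maximum map max : [0,∞] × [0,∞] → [0,∞] is a contraction with respect to the product of two copies of the approach convergence on [0,∞]: for every 𝔴 ∈ U(ℝ≥0∞ × ℝ≥0∞) and all v₁, v₂ ∈ ℝ≥0∞, max ( v₁ ⊖ ξ (U π₁ 𝔴) ) ( v₂ ⊖ ξ (U π₂ 𝔴) ) ≥ (max v₁ v₂) ⊖ ξ (U max' 𝔴), where max' : ℝ≥0∞ × ℝ≥0∞ → ℝ≥0∞ is the maximum function. -/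
open scoped ENNReal
open CategoryTheory

noncomputable section

/-- The approach convergence on `[0,∞]`: `λ(𝔳, v) = v ⊖ ξ 𝔳` (truncated subtraction). -/
def ennConv (𝔳 : Ultrafilter ℝ≥0∞) (v : ℝ≥0∞) : ℝ≥0∞ :=
  v - xi 𝔳

/-- The set `[0,∞]^X` of contractions `φ : X → [0,∞]`, for a convergence `a` on `X`. -/
def Contractions {X : Type*} (a : Ultrafilter X → X → ℝ≥0∞) : Type _ :=
  {φ : X → ℝ≥0∞ // IsContraction a ennConv φ}

/-- The evaluation map `ev : [0,∞]^X × X → [0,∞]`. -/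
def evMap {X : Type*} (a : Ultrafilter X → X → ℝ≥0∞) : Contractions a × X → ℝ≥0∞ :=
  fun p => p.1.1 p.2

/-- The exponential convergence `d` on `[0,∞]^X`:
`d(𝔭,φ) = inf {u | ∀ 𝔮 ∈ U([0,∞]^X × X) with U π₁ 𝔮 = 𝔭, ∀ x ∈ X,`
`u ∨ a (U π₂ 𝔮) x + ξ (U ev 𝔮) ≥ φ x}`. -/
def dExp {X : Type*} (a : Ultrafilter X → X → ℝ≥0∞) :
    Ultrafilter (Contractions a) → Contractions a → ℝ≥0∞ :=
  fun 𝔭 φ => sInf {u : ℝ≥0∞ | ∀ 𝔮 : Ultrafilter (Contractions a × X),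
    Ultrafilter.map Prod.fst 𝔮 = 𝔭 → ∀ x : X,
      φ.1 x ≤ max u (a (Ultrafilter.map Prod.snd 𝔮) x) + xi (Ultrafilter.map (evMap a) 𝔮)}

/-- A convergence relation `a : U X ⇸ X` is transitive:
`Ū a 𝔛 𝔵 + a 𝔵 x ≥ a (m_X 𝔛) x`. -/
def IsTransitiveConv {X : Type*} (a : Ultrafilter X → X → ℝ≥0∞) : Prop :=
  ∀ (𝔛 : Ultrafilter (Ultrafilter X)) (𝔵 : Ultrafilter X) (x : X),
    a (mU 𝔛) x ≤ uExt a 𝔛 𝔵 + a 𝔵 x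

/-- A convergence relation `a : U X ⇸ X` is reflexive: `a (e_X x) x = 0`. -/
def IsReflexiveConv {X : Type*} (a : Ultrafilter X → X → ℝ≥0∞) : Prop :=
  ∀ x : X, a (pure x : Ultrafilter X) x = 0

lemma xi_map_mono {X : Type*} {f g : X → ℝ≥0∞} (h : ∀ x, g x ≤ f x) (𝔵 : Ultrafilter X) :
    xi (Ultrafilter.map g 𝔵) ≤ xi (Ultrafilter.map f 𝔵) := by
  apply iSup₂_le
  intro A hA
  have hS : g ⁻¹' A ∈ 𝔵 := hA
  have hB : f '' (g ⁻¹' A) ∈ Ultrafilter.map f 𝔵 := by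
    refine Ultrafilter.mem_map.2 (𝔵.mem_of_superset hS ?_)
    exact fun x hx => Set.mem_image_of_mem f hx
  refine le_trans ?_ (le_iSup₂_of_le (f '' (g ⁻¹' A)) hB le_rfl)
  refine le_iInf₂ ?_
  rintro u ⟨x, hx, rfl⟩
  exact le_trans (iInf₂_le (g x) hx) (h x)

/-- The binary maximum `max : [0,∞] × [0,∞] → [0,∞]` is a contraction with
respect to the product of two copies of the approach convergence on `[0,∞]`. -/
theorem max_isContraction (𝔴 : Ultrafilter (ℝ≥0∞ × ℝ≥0∞)) (v₁ v₂ : ℝ≥0∞) :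
    (max v₁ v₂) - xi (Ultrafilter.map (fun p => max p.1 p.2) 𝔴) ≤
      max (v₁ - xi (Ultrafilter.map Prod.fst 𝔴)) (v₂ - xi (Ultrafilter.map Prod.snd 𝔴)) := by
  have h1 : xi (Ultrafilter.map Prod.fst 𝔴) ≤
      xi (Ultrafilter.map (fun p : ℝ≥0∞ × ℝ≥0∞ => max p.1 p.2) 𝔴) :=
    xi_map_mono (fun p => le_max_left _ _) 𝔴
  have h2 : xi (Ultrafilter.map Prod.snd 𝔴) ≤
      xi (Ultrafilter.map (fun p : ℝ≥0∞ × ℝ≥0∞ => max p.1 p.2) 𝔴) :=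
    xi_map_mono (fun p => le_max_right _ _) 𝔴
  rcases le_total v₁ v₂ with h | h
  · rw [max_eq_right h]
    exact le_max_of_le_right (tsub_le_tsub_left h2 v₂)
  · rw [max_eq_left h]
    exact le_max_of_le_left (tsub_le_tsub_left h1 v₁)

end
end

section
/- Let X be a set with a reflexive and transitive convergence a : U X ⇸ X. Equip U X with the convergence a♯(𝔛,𝔵) = 0 if m_X 𝔛 = 𝔵 and ∞ otherwise, and U X × X with the product convergence. Then a, viewed as a map U X × X → [0,∞], is a contraction: for every 𝔴 ∈ U(U X × X), every 𝔵 ∈ U X and every x ∈ X, if m_X (U π₁ 𝔴) = 𝔵 then a (U π₂ 𝔴) x ≥ (a 𝔵 x) ⊖ ξ (U a' 𝔴), where a' : U X × X → ℝ≥0∞ is a viewed as a function. -/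
open scoped ENNReal
open CategoryTheory

noncomputable section

theorem iInf_le_xi {𝔳 : Ultrafilter ℝ≥0∞} {C : Set ℝ≥0∞} (hC : C ∈ 𝔳) :
    ⨅ u ∈ C, u ≤ xi 𝔳 :=
  le_biSup (fun C => ⨅ u ∈ C, u) hC

theorem uExt_map_fst_map_snd_le_xi {X Y : Type*} (r : X → Y → ℝ≥0∞)
    (𝔴 : Ultrafilter (X × Y)) :
    uExt r (Ultrafilter.map Prod.fst 𝔴) (Ultrafilter.map Prod.snd 𝔴) ≤
      xi (Ultrafilter.map (fun p => r p.1 p.2) 𝔴) := by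
  refine iSup₂_le fun A hA => iSup₂_le fun B hB => ?_
  have hAB : A ×ˢ B ∈ 𝔴 := Filter.inter_mem hA hB
  calc ⨅ x ∈ A, ⨅ y ∈ B, r x y ≤ ⨅ u ∈ (fun p => r p.1 p.2) '' (A ×ˢ B), u := by
        refine le_iInf₂ ?_
        rintro _ ⟨p, ⟨hpA, hpB⟩, rfl⟩
        exact (iInf₂_le p.1 hpA).trans (iInf₂_le p.2 hpB)
    _ ≤ xi (Ultrafilter.map (fun p => r p.1 p.2) 𝔴) :=
        iInf_le_xi (Filter.image_mem_map hAB)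

theorem conv_isContraction_general (X : Type*) (a : Ultrafilter X → X → ℝ≥0∞)
    (htrans : IsTransitiveConv a)
    (𝔴 : Ultrafilter (Ultrafilter X × X)) (𝔵 : Ultrafilter X) (x : X)
    (h : mU (Ultrafilter.map Prod.fst 𝔴) = 𝔵) :
    a 𝔵 x - xi (Ultrafilter.map (fun p => a p.1 p.2) 𝔴) ≤ a (Ultrafilter.map Prod.snd 𝔴) x := by
  subst h
  rw [tsub_le_iff_left]
  calc a (mU (Ultrafilter.map Prod.fst 𝔴)) x
      ≤ uExt a (Ultrafilter.map Prod.fst 𝔴) (Ultrafilter.map Prod.snd 𝔴)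
          + a (Ultrafilter.map Prod.snd 𝔴) x := htrans _ _ x
    _ ≤ xi (Ultrafilter.map (fun p => a p.1 p.2) 𝔴) + a (Ultrafilter.map Prod.snd 𝔴) x :=
        add_le_add_left (uExt_map_fst_map_snd_le_xi a 𝔴) _

/-- For a reflexive and transitive convergence `a : U X ⇸ X`, the map
`a : U X × X → [0,∞]` is a contraction, where `U X` carries the convergence
`a♯(𝔛,𝔵) = 0` if `m_X 𝔛 = 𝔵` and `∞` otherwise, `U X × X` the product convergence and
`[0,∞]` its approach convergence: for every `𝔴 ∈ U(U X × X)`, `𝔵 ∈ U X` and `x ∈ X`,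
if `m_X (U π₁ 𝔴) = 𝔵` then `a (U π₂ 𝔴) x ≥ (a 𝔵 x) ⊖ ξ (U a' 𝔴)`. -/
theorem conv_isContraction (X : Type*) (a : Ultrafilter X → X → ℝ≥0∞)
    (hrefl : IsReflexiveConv a) (htrans : IsTransitiveConv a)
    (𝔴 : Ultrafilter (Ultrafilter X × X)) (𝔵 : Ultrafilter X) (x : X)
    (h : mU (Ultrafilter.map Prod.fst 𝔴) = 𝔵) :
    a 𝔵 x - xi (Ultrafilter.map (fun p => a p.1 p.2) 𝔴) ≤ a (Ultrafilter.map Prod.snd 𝔴) x :=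
  conv_isContraction_general X a htrans 𝔴 𝔵 x h

end
end

section
/- Let X be a set with a reflexive convergence a : U X ⇸ X, let [0,∞]^X be the set of contractions X → [0,∞], and let d : U([0,∞]^X) ⇸ [0,∞]^X be defined by d(𝔭,φ) = inf {u ∈ ℝ≥0∞ | ∀ 𝔮 ∈ U([0,∞]^X × X) with U π₁ 𝔮 = 𝔭, ∀ x ∈ X, max u (a (U π₂ 𝔮) x) + ξ(U ev 𝔮) ≥ φ x}. Then for every u ∈ ℝ≥0∞, every 𝔓 ∈ U(U([0,∞]^X)), every 𝔭 ∈ U([0,∞]^X) and every φ ∈ [0,∞]^X: (1) max u (d(𝔭,φ)) ≥ d(𝔭, u ⊙ φ), where u ⊙ φ is the contraction x ↦ max u (φ x); and (2) max u (Ū d (𝔓, 𝔭)) ≥ Ū d (𝔓, U t_u^X 𝔭), where t_u^X : [0,∞]^X → [0,∞]^X sends φ to u ⊙ φ. -/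
open scoped ENNReal
open CategoryTheory

noncomputable section

/-- `ξ (U t_u 𝔳) ≥ max u (ξ 𝔳)`. -/
lemma max_xi_le_xi_map_max (u : ℝ≥0∞) (𝔳 : Ultrafilter ℝ≥0∞) :
    max u (xi 𝔳) ≤ xi (Ultrafilter.map (fun w => max u w) 𝔳) := by
  apply max_le
  · have hmem : {w : ℝ≥0∞ | u ≤ w} ∈ Ultrafilter.map (fun w => max u w) 𝔳 := by
      rw [Ultrafilter.mem_map]
      have : (fun w : ℝ≥0∞ => max u w) ⁻¹' {w | u ≤ w} = Set.univ := by
        ext w; simp [le_max_left]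
      rw [this]; exact Filter.univ_mem
    refine le_trans ?_ (le_iSup₂_of_le {w : ℝ≥0∞ | u ≤ w} hmem le_rfl)
    exact le_iInf₂ fun w hw => hw
  · refine iSup₂_le fun A hA => ?_
    have hmem : (fun w : ℝ≥0∞ => max u w) '' A ∈ Ultrafilter.map (fun w => max u w) 𝔳 := by
      rw [Ultrafilter.mem_map]
      exact Filter.mem_of_superset hA (Set.subset_preimage_image _ _)
    refine le_trans ?_ (le_iSup₂_of_le _ hmem le_rfl)
    refine le_iInf₂ fun w hw => ?_
    obtain ⟨x, hx, rfl⟩ := hw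
    exact le_trans (iInf₂_le x hx) (le_max_right u x)

/-- `max u p ⊖ max u q ≤ p ⊖ q` in `[0,∞]`. -/
lemma max_tsub_max_le (u p q : ℝ≥0∞) : max u p - max u q ≤ p - q := by
  rcases le_total p u with h | h
  · rw [max_eq_left h, tsub_eq_zero_of_le (le_max_left u q)]
    exact zero_le
  · rw [max_eq_right h]
    exact tsub_le_tsub_left (le_max_right u q) p

/-- If `φ : X → [0,∞]` is a contraction then so is `u ⊙ φ = fun x => max u (φ x)`. -/
lemma isContraction_max {X : Type*} {a : Ultrafilter X → X → ℝ≥0∞} (u : ℝ≥0∞)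
    (φ : X → ℝ≥0∞) (hφ : IsContraction a ennConv φ) :
    IsContraction a ennConv (fun x => max u (φ x)) := by
  intro 𝔵 x
  have hmap : Ultrafilter.map (fun x => max u (φ x)) 𝔵 =
      Ultrafilter.map (fun w => max u w) (Ultrafilter.map φ 𝔵) :=
    (Ultrafilter.map_map 𝔵 φ fun w => max u w).symm
  calc ennConv (Ultrafilter.map (fun x => max u (φ x)) 𝔵) (max u (φ x))
      = max u (φ x) - xi (Ultrafilter.map (fun w => max u w) (Ultrafilter.map φ 𝔵)) := by
        rw [ennConv, hmap]
    _ ≤ max u (φ x) - max u (xi (Ultrafilter.map φ 𝔵)) :=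
        tsub_le_tsub_left (max_xi_le_xi_map_max u _) _
    _ ≤ φ x - xi (Ultrafilter.map φ 𝔵) := max_tsub_max_le _ _ _
    _ ≤ a 𝔵 x := hφ 𝔵 x

/-- The map `t_u^X : [0,∞]^X → [0,∞]^X` sending a contraction `φ` to `u ⊙ φ`. -/
def maxCon {X : Type*} (a : Ultrafilter X → X → ℝ≥0∞) (u : ℝ≥0∞)
    (φ : Contractions a) : Contractions a :=
  ⟨fun x => max u (φ.1 x), isContraction_max u φ.1 φ.2⟩

lemma dExp_maxCon_le {X : Type*} (a : Ultrafilter X → X → ℝ≥0∞) (u : ℝ≥0∞)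
    (𝔭 : Ultrafilter (Contractions a)) (φ : Contractions a) :
    dExp a 𝔭 (maxCon a u φ) ≤ max u (dExp a 𝔭 φ) := by
  rw [dExp, dExp, sup_sInf_eq]
  -- every admissible bound `v` for `φ` yields the admissible bound `u ⊔ v` for `u ⊙ φ`
  refine le_iInf₂ fun v hv => sInf_le fun 𝔮 h𝔮 x => ?_
  have hφ := hv 𝔮 h𝔮 x
  change max u (φ.1 x) ≤ max (u ⊔ v) _ + _
  refine max_le ((le_sup_left.trans (le_max_left _ _)).trans le_self_add) (hφ.trans ?_)
  gcongr
  exact le_sup_right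

lemma uExt_map_le_max {X Y : Type*} {r : X → Y → ℝ≥0∞} {f : Y → Y} {u : ℝ≥0∞}
    (hf : ∀ x y, r x (f y) ≤ max u (r x y)) (𝔵 : Ultrafilter X) (𝔶 : Ultrafilter Y) :
    uExt r 𝔵 (Ultrafilter.map f 𝔶) ≤ max u (uExt r 𝔵 𝔶) := by
  refine iSup₂_le fun A hA => iSup₂_le fun B hB => ?_
  have hB' : f ⁻¹' B ∈ 𝔶 := Ultrafilter.mem_map.mp hB
  calc ⨅ x ∈ A, ⨅ y ∈ B, r x y
      ≤ ⨅ x ∈ A, ⨅ y ∈ f ⁻¹' B, max u (r x y) :=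
        iInf₂_mono fun x _ => le_iInf₂ fun y hy => (iInf₂_le (f y) hy).trans (hf x y)
    _ = max u (⨅ x ∈ A, ⨅ y ∈ f ⁻¹' B, r x y) := by simp only [sup_iInf_eq]
    _ ≤ max u (uExt r 𝔵 𝔶) :=
        max_le_max_left u (le_iSup₂_of_le A hA (le_iSup₂_of_le _ hB' le_rfl))

theorem dExp_maxact_general (X : Type*) (a : Ultrafilter X → X → ℝ≥0∞)
    (u : ℝ≥0∞)
    (𝔓 : Ultrafilter (Ultrafilter (Contractions a))) (𝔭 : Ultrafilter (Contractions a))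
    (φ : Contractions a) :
    dExp a 𝔭 (maxCon a u φ) ≤ max u (dExp a 𝔭 φ) ∧
    uExt (dExp a) 𝔓 (Ultrafilter.map (maxCon a u) 𝔭) ≤ max u (uExt (dExp a) 𝔓 𝔭) :=
  ⟨dExp_maxCon_le a u 𝔭 φ, uExt_map_le_max (dExp_maxCon_le a u) 𝔓 𝔭⟩

/-- For a set `X` with a reflexive convergence `a` and the exponential
convergence `d` on `[0,∞]^X`: (1) `max u (d(𝔭,φ)) ≥ d(𝔭, u ⊙ φ)`, and
(2) `max u (Ū d (𝔓,𝔭)) ≥ Ū d (𝔓, U t_u^X 𝔭)`. -/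
theorem dExp_maxact (X : Type*) (a : Ultrafilter X → X → ℝ≥0∞)
    (hrefl : IsReflexiveConv a) (u : ℝ≥0∞)
    (𝔓 : Ultrafilter (Ultrafilter (Contractions a))) (𝔭 : Ultrafilter (Contractions a))
    (φ : Contractions a) :
    dExp a 𝔭 (maxCon a u φ) ≤ max u (dExp a 𝔭 φ) ∧
    uExt (dExp a) 𝔓 (Ultrafilter.map (maxCon a u) 𝔭) ≤ max u (uExt (dExp a) 𝔓 𝔭) :=
  dExp_maxact_general X a u 𝔓 𝔭 φ

end
end
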